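/- The even spinor φ^{+(m,l,k)}(z) = c_{m,l,k}·(k·v^{k−1}_{(l,m−l)}, −v^k_{(l,m−l)})ᵗ, where c_{m,l,k} = √((m+1−k)!/(k! l! (m−l)!)), is a harmonic spinor on C²: D φ^{+(m,l,k)} = 0, where D = [[∂/∂z₁, −∂/∂z̄₂],[∂/∂z₂, ∂/∂z̄₁]]. -/
import Mathlib


open MvPolynomial

/- Variables: index 0 ↦ z₁, 1 ↦ z₂, 2 ↦ z̄₁, 3 ↦ z̄₂ in `ℂ[z₁, z₂, z̄₁, z̄₂]`. -/

/-- `e₋ = -z̄₂ ∂/∂z₁ + z̄₁ ∂/∂z₂`. -/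
noncomputable def eMinus : Derivation ℂ (MvPolynomial (Fin 4) ℂ) (MvPolynomial (Fin 4) ℂ) :=
  mkDerivation ℂ ![-(X 3), X 2, 0, 0]

/-- `v^k_{(l, m-l)} = (e₋)^k (z₁^l z₂^{m-l})`. -/
noncomputable def v (m l k : ℕ) : MvPolynomial (Fin 4) ℂ :=
  (fun p => eMinus p)^[k] (X 0 ^ l * X 1 ^ (m - l))

/-- The chiral Dirac operator `D = [[∂/∂z₁, -∂/∂z̄₂], [∂/∂z₂, ∂/∂z̄₁]]`. -/
noncomputable def diracD (f : MvPolynomial (Fin 4) ℂ × MvPolynomial (Fin 4) ℂ) :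
    MvPolynomial (Fin 4) ℂ × MvPolynomial (Fin 4) ℂ :=
  (pderiv 0 f.1 - pderiv 3 f.2, pderiv 1 f.1 + pderiv 2 f.2)

local notation "P4" => MvPolynomial (Fin 4) ℂ

lemma eMinus_apply (p : P4) :
    eMinus p = -(X 3) * pderiv 0 p + X 2 * pderiv 1 p := by
  have h : eMinus = (-(X 3 : P4)) • (pderiv 0 : Derivation ℂ P4 P4)
      + (X 2 : P4) • (pderiv 1 : Derivation ℂ P4 P4) := by
    apply derivation_ext
    intro i
    fin_cases i <;>
      simp [eMinus, mkDerivation_X, pderiv_X, Fin.isValue, smul_eq_mul]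
  rw [h]
  simp [smul_eq_mul]

lemma pderiv_comm' (i j : Fin 4) (p : P4) :
    pderiv i (pderiv j p) = pderiv j (pderiv i p) := by
  induction p using MvPolynomial.induction_on with
  | C a => simp
  | add p q hp hq => simp [hp, hq]
  | mul_X p n h =>
    simp only [pderiv_mul, pderiv_X, map_add, map_mul, h, Pi.single_apply]
    split_ifs <;> simp [h] <;> ring

lemma pd0_eMinus (p : P4) : pderiv 0 (eMinus p) = eMinus (pderiv 0 p) := by
  simp only [eMinus_apply, map_add, map_neg, map_mul, pderiv_mul, pderiv_X]
  norm_num [pderiv_comm' 0 0 p, pderiv_comm' 0 1 p, Pi.single_apply, (show ((3:Fin 4)) ≠ 0 by decide), (show ((2:Fin 4)) ≠ 0 by decide), (show ((3:Fin 4)) ≠ 1 by decide), (show ((2:Fin 4)) ≠ 1 by decide), (show ((2:Fin 4)) ≠ 3 by decide), (show ((3:Fin 4)) ≠ 2 by decide)]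

lemma pd1_eMinus (p : P4) : pderiv 1 (eMinus p) = eMinus (pderiv 1 p) := by
  simp only [eMinus_apply, map_add, map_neg, map_mul, pderiv_mul, pderiv_X]
  norm_num [pderiv_comm' 1 0 p, pderiv_comm' 1 1 p, Pi.single_apply, (show ((3:Fin 4)) ≠ 0 by decide), (show ((2:Fin 4)) ≠ 0 by decide), (show ((3:Fin 4)) ≠ 1 by decide), (show ((2:Fin 4)) ≠ 1 by decide), (show ((2:Fin 4)) ≠ 3 by decide), (show ((3:Fin 4)) ≠ 2 by decide)]

lemma pd3_eMinus (p : P4) :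
    pderiv 3 (eMinus p) = eMinus (pderiv 3 p) - pderiv 0 p := by
  simp only [eMinus_apply, map_add, map_neg, map_mul, pderiv_mul, pderiv_X]
  norm_num [pderiv_comm' 3 0 p, pderiv_comm' 3 1 p, Pi.single_apply, (show ((3:Fin 4)) ≠ 0 by decide), (show ((2:Fin 4)) ≠ 0 by decide), (show ((3:Fin 4)) ≠ 1 by decide), (show ((2:Fin 4)) ≠ 1 by decide), (show ((2:Fin 4)) ≠ 3 by decide), (show ((3:Fin 4)) ≠ 2 by decide)]
  ring

lemma pd2_eMinus (p : P4) :
    pderiv 2 (eMinus p) = eMinus (pderiv 2 p) + pderiv 1 p := by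
  simp only [eMinus_apply, map_add, map_neg, map_mul, pderiv_mul, pderiv_X]
  norm_num [pderiv_comm' 2 0 p, pderiv_comm' 2 1 p, Pi.single_apply, (show ((3:Fin 4)) ≠ 0 by decide), (show ((2:Fin 4)) ≠ 0 by decide), (show ((3:Fin 4)) ≠ 1 by decide), (show ((2:Fin 4)) ≠ 1 by decide), (show ((2:Fin 4)) ≠ 3 by decide), (show ((3:Fin 4)) ≠ 2 by decide)]
  ring

lemma v_succ (m l k : ℕ) : v m l (k + 1) = eMinus (v m l k) := by
  simp [v, Function.iterate_succ_apply']

lemma pd3_v0 (m l : ℕ) : pderiv 3 (v m l 0) = 0 := by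
  simp [v, pderiv_mul, pderiv_pow, pderiv_X]

lemma pd2_v0 (m l : ℕ) : pderiv 2 (v m l 0) = 0 := by
  simp [v, pderiv_mul, pderiv_pow, pderiv_X]

lemma pd3_v (m l k : ℕ) :
    pderiv 3 (v m l (k + 1)) = -((k : ℂ) + 1) • pderiv 0 (v m l k) := by
  induction k with
  | zero => simp [v_succ, pd3_eMinus, pd3_v0]
  | succ k ih =>
    rw [v_succ, pd3_eMinus, ih, v_succ, pd0_eMinus]
    rw [Derivation.map_smul]
    push_cast
    module

lemma pd2_v (m l k : ℕ) :
    pderiv 2 (v m l (k + 1)) = ((k : ℂ) + 1) • pderiv 1 (v m l k) := by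
  induction k with
  | zero => simp [v_succ, pd2_eMinus, pd2_v0]
  | succ k ih =>
    rw [v_succ, pd2_eMinus, ih, v_succ, pd1_eMinus]
    rw [Derivation.map_smul]
    push_cast
    module

/-- The even spinor `φ^{+(m,l,k)} = (k v^{k-1}_{(l,m-l)}, -v^k_{(l,m-l)})`
(up to normalization) is a harmonic spinor: `D φ^{+(m,l,k)} = 0`. -/
theorem phiPlus_harmonic (m l k : ℕ) (hl : l ≤ m) (hk : k ≤ m + 1) :
    diracD ((k : ℂ) • v m l (k - 1), -(v m l k)) = 0 := by
  cases k with
  | zero => simp [diracD, pd3_v0, pd2_v0]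
  | succ k =>
    have h1 := pd3_v m l k
    have h2 := pd2_v m l k
    simp only [diracD, Nat.add_sub_cancel, map_smul, Derivation.map_smul, map_neg, h1, h2, Prod.mk_eq_zero,
      Nat.cast_add, Nat.cast_one, neg_smul, neg_neg, sub_self, add_neg_cancel, neg_add_cancel,
      and_self]
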